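/- arXiv:math/0611047 — 3 statements merged into one kernel-verified Lean document; each statement's English description precedes it below -/
import Mathlib

section
/- For a parameter ideal I = (x_1,...,x_i) in a Noetherian local ring (R,m), an element z lies in the limit closure I^lim if and only if the class [z/(x_1⋯x_i)] in the Čech (local) cohomology module H_I^i(R) is zero. -/
noncomputable section

/-- The ideal `(x_1^{s+1},…,x_i^{s+1})`. -/
def paramPowerIdeal {R : Type*} [CommRing R] {i : ℕ} (x : Fin i → R) (s : ℕ) : Ideal R :=
  Ideal.span (Set.range fun j => x j ^ (s + 1))

lemma paramPowerIdeal_le_comap {R : Type*} [CommRing R] {i : ℕ} (x : Fin i → R)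
    {s t : ℕ} (h : s ≤ t) :
    paramPowerIdeal x s ≤
      Submodule.comap (LinearMap.mulLeft R ((∏ j, x j) ^ (t - s))) (paramPowerIdeal x t) := by
  rw [paramPowerIdeal, Ideal.span_le]
  rintro _ ⟨j, rfl⟩
  have hdvd : x j ^ (t - s) ∣ (∏ k, x k) ^ (t - s) :=
    pow_dvd_pow_of_dvd (Finset.dvd_prod_of_mem x (Finset.mem_univ j)) _
  obtain ⟨r, hr⟩ := hdvd
  have key : (∏ k, x k) ^ (t - s) * x j ^ (s + 1) = r * x j ^ (t + 1) := by
    rw [hr, show t + 1 = (t - s) + (s + 1) by omega, pow_add]; ring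
  show (LinearMap.mulLeft R ((∏ j, x j) ^ (t - s))) (x j ^ (s + 1)) ∈ paramPowerIdeal x t
  rw [LinearMap.mulLeft_apply, key]
  exact Ideal.mul_mem_left _ r (Ideal.subset_span ⟨j, rfl⟩)

/-- The transition maps of the Čech direct system
`R/(x_1,…,x_i) → R/(x_1^2,…,x_i^2) → ⋯`, given by multiplication by powers of `x_1⋯x_i`;
their direct limit computes the local cohomology `H_I^i(R)` via the Čech complex. -/
def cechTransition {R : Type*} [CommRing R] {i : ℕ} (x : Fin i → R) :
    ∀ s t : ℕ, s ≤ t → (R ⧸ paramPowerIdeal x s) →ₗ[R] R ⧸ paramPowerIdeal x t :=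
  fun s t h => Submodule.mapQ _ _ (LinearMap.mulLeft R ((∏ j, x j) ^ (t - s)))
    (paramPowerIdeal_le_comap x h)

/-- The Čech model of the top local cohomology `H_I^i(R)`,
`I = (x_1,…,x_i)`:  `lim_s R/(x_1^s,…,x_i^s)`. -/
abbrev cechLocalCohomology {R : Type*} [CommRing R] {i : ℕ} (x : Fin i → R) : Type _ :=
  Module.DirectLimit (fun s : ℕ => R ⧸ paramPowerIdeal x s) (cechTransition x)

/-- The class `[z/(x_1⋯x_i)] ∈ H_I^i(R)`, represented at the first stage of the limit. -/
def cechClass {R : Type*} [CommRing R] {i : ℕ} (x : Fin i → R) (z : R) :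
    cechLocalCohomology x :=
  Module.DirectLimit.of R ℕ (fun s : ℕ => R ⧸ paramPowerIdeal x s) (cechTransition x) 0
    (Ideal.Quotient.mk (paramPowerIdeal x 0) z)

noncomputable def idealHeight {R : Type*} [CommRing R] (I : Ideal R) : ℕ∞ :=
  ⨅ (P : PrimeSpectrum R) (_ : I ≤ P.asIdeal), Order.height P

/-! An element of stage `0` of a direct limit vanishes iff its image at some stage `t` does.
At stage `t` the image of `z` is `(x_1⋯x_i)^t z` modulo `(x_1^{t+1},…,x_i^{t+1})`, so
`[z/(x_1⋯x_i)] = 0` is exactly the colon condition defining `I^lim`, with `s = t + 1`. -/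

theorem Module.DirectLimit.of_eq_zero_iff {R ι : Type*} [Ring R] [Preorder ι] [DecidableEq ι]
    [IsDirectedOrder ι] {G : ι → Type*} [∀ i, AddCommGroup (G i)] [∀ i, Module R (G i)]
    {f : ∀ i j, i ≤ j → G i →ₗ[R] G j} [DirectedSystem G (f · · ·)] {i : ι} {g : G i} :
    Module.DirectLimit.of R ι G f i g = 0 ↔ ∃ j, ∃ hij : i ≤ j, f i j hij g = 0 := by
  refine ⟨Module.DirectLimit.of.zero_exact, ?_⟩
  rintro ⟨j, hij, hg⟩
  rw [← Module.DirectLimit.of_f (hij := hij), hg, map_zero]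

section Cech

variable {R : Type*} [CommRing R] {i : ℕ} (x : Fin i → R)

theorem cechTransition_mk {s t : ℕ} (h : s ≤ t) (a : R) :
    cechTransition x s t h (Ideal.Quotient.mk _ a) =
      Ideal.Quotient.mk _ ((∏ j, x j) ^ (t - s) * a) :=
  rfl

instance cechDirectedSystem :
    DirectedSystem (fun s : ℕ => R ⧸ paramPowerIdeal x s) (cechTransition x · · ·) where
  map_self s q := by
    induction q using Submodule.Quotient.induction_on with
    | _ a => rw [Ideal.Quotient.mk_eq_mk, cechTransition_mk, Nat.sub_self, pow_zero, one_mul]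
  map_map {s t u} hst htu q := by
    induction q using Submodule.Quotient.induction_on with
    | _ a =>
      simp only [Ideal.Quotient.mk_eq_mk, cechTransition_mk]
      rw [← mul_assoc, ← pow_add, Nat.sub_add_sub_cancel htu hst]

theorem cechClass_eq_zero_iff (z : R) :
    cechClass x z = 0 ↔ ∃ t, (∏ j, x j) ^ t * z ∈ paramPowerIdeal x t := by
  simp only [cechClass, Module.DirectLimit.of_eq_zero_iff, cechTransition_mk,
    Ideal.Quotient.eq_zero_iff_mem, Nat.sub_zero, exists_prop, zero_le, true_and]

end Cech

theorem stmt1_general {R : Type*} [CommRing R] {i : ℕ} (x : Fin i → R) (z : R) :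
    (∃ s ≥ 1, (∏ j, x j) ^ (s - 1) * z ∈ Ideal.span (Set.range fun j => x j ^ s)) ↔
      cechClass x z = 0 := by
  rw [cechClass_eq_zero_iff]
  constructor
  · rintro ⟨s, hs, hmem⟩
    obtain ⟨t, rfl⟩ := Nat.exists_eq_add_of_le' hs
    exact ⟨t, hmem⟩
  · rintro ⟨t, hmem⟩
    exact ⟨t + 1, le_add_self, hmem⟩

/-- for a parameter ideal `I = (x_1,…,x_i)` in a Noetherian local ring, `z`
lies in the limit closure `I^lim = ⋃_{s≥1} ((x_1^s,…,x_i^s) : (x_1⋯x_i)^{s-1})` iff the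
class `[z/(x_1⋯x_i)]` in the Čech local cohomology module `H_I^i(R)` vanishes. -/
theorem stmt1 {R : Type*} [CommRing R] [IsLocalRing R] [IsNoetherianRing R]
    {i : ℕ} (x : Fin i → R)
    (hparam : idealHeight (Ideal.span (Set.range x)) = (i : ℕ∞)) (z : R) :
    (∃ s ≥ 1, (∏ j, x j) ^ (s - 1) * z ∈ Ideal.span (Set.range fun j => x j ^ s)) ↔
      cechClass x z = 0 :=
  stmt1_general x z

end
end

section
/- Let (R,m) be a Noetherian local ring with sop x_1,...,x_d such that (x_1,...,x_i) : x_{i+1} = (x_1,...,x_i)^unm and (x_1,...,x_i)^unm = (x_1,...,x_i)^* for all i < d, where ^unm is the unmixed hull and ^* the tight closure. Then for i < d one has the inclusion (x_1,...,x_i)^* ⊆ (x_1,...,x_{i+1})^lim, and consequently the natural maps (x_1,...,x_i)^*/(x_1,...,x_i)^lim → (x_1,...,x_{i+1})^*/(x_1,...,x_{i+1})^lim, r ↦ r, and r ↦ r·x_{i+1}, are zero maps. -/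
/-! If `r ∈ (x_1,…,x_i)^*`, the hypotheses give `r x_{i+1} ∈ (x_1,…,x_i)`. Multiplying by
`x_1⋯x_i` lands in `(x_1^2,…,x_i^2)`, so `(x_1⋯x_{i+1}) r ∈ (x_1^2,…,x_{i+1}^2)`, i.e.
`r ∈ (x_1,…,x_{i+1})^lim` with `s = 2`; and `r x_{i+1}` lies even in `(x_1,…,x_{i+1})`,
which is the `s = 1` part of the limit closure. -/

open IsLocalRing

def offMinimalPrimes (R : Type*) [CommRing R] : Set R :=
  {c : R | ∀ P ∈ minimalPrimes R, c ∉ P}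

def frobeniusPower {R : Type*} [CommRing R] (I : Ideal R) (q : ℕ) : Ideal R :=
  Ideal.span ((fun r => r ^ q) '' (I : Set R))

def tightClosure {R : Type*} [CommRing R] (p : ℕ) (I : Ideal R) : Set R :=
  {z : R | ∃ c ∈ offMinimalPrimes R, ∃ e₀ : ℕ, ∀ e ≥ e₀,
    c * z ^ p ^ e ∈ frobeniusPower I (p ^ e)}

/-- The ideal `(x_1,…,x_i)` generated by the first `i` entries of `x`. -/
def firstIdeal {R : Type*} [CommRing R] {d : ℕ} (x : Fin d → R) (i : ℕ) : Ideal R :=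
  Ideal.span (x '' {j : Fin d | (j : ℕ) < i})

/-- The limit closure `(x_1,…,x_i)^lim = ⋃_s ((x_1^s,…,x_i^s) : (x_1⋯x_i)^{s-1})`. -/
def firstLimitClosure {R : Type*} [CommRing R] {d : ℕ} (x : Fin d → R) (i : ℕ) : Set R :=
  {z : R | ∃ s ≥ 1,
    (∏ j ∈ Finset.univ.filter (fun j : Fin d => (j : ℕ) < i), x j) ^ (s - 1) * z ∈
      Ideal.span ((fun j => x j ^ s) '' {j : Fin d | (j : ℕ) < i})}

theorem Ideal.prod_mul_mem_span_sq_image {R ι : Type*} [CommRing R] [DecidableEq ι] (x : ι → R)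
    (s : Finset ι) {a : R} (ha : a ∈ Ideal.span (x '' s)) :
    (∏ j ∈ s, x j) * a ∈ Ideal.span ((fun j => x j ^ 2) '' s) := by
  suffices Ideal.span (x '' s) ≤
      (Ideal.span ((fun j => x j ^ 2) '' s)).colon (Ideal.span {∏ j ∈ s, x j}) by
    simpa only [Submodule.mem_colon_span_singleton, smul_eq_mul, mul_comm a] using this ha
  rw [Ideal.span_le]
  rintro _ ⟨j, hj, rfl⟩
  rw [SetLike.mem_coe, Submodule.mem_colon_span_singleton, smul_eq_mul,
    ← Finset.mul_prod_erase s x hj, ← mul_assoc, ← sq]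
  exact Ideal.mul_mem_right _ _ (Ideal.subset_span ⟨j, hj, rfl⟩)

theorem filter_val_lt_succ {d : ℕ} (i : ℕ) (hi : i < d) :
    Finset.univ.filter (fun j : Fin d => (j : ℕ) < i + 1) =
      insert ⟨i, hi⟩ (Finset.univ.filter (fun j : Fin d => (j : ℕ) < i)) := by
  ext j
  simp only [Finset.mem_filter, Finset.mem_univ, true_and, Finset.mem_insert, Fin.ext_iff]
  omega

section FirstIdeal

variable {R : Type*} [CommRing R] {d : ℕ} (x : Fin d → R)

theorem firstIdeal_mono {i k : ℕ} (hik : i ≤ k) : firstIdeal x i ≤ firstIdeal x k :=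
  Ideal.span_mono (Set.image_mono fun _ (hj : _ < i) => lt_of_lt_of_le hj hik)

theorem firstIdeal_subset_firstLimitClosure (i : ℕ) :
    (firstIdeal x i : Set R) ⊆ firstLimitClosure x i := fun z hz =>
  ⟨1, le_rfl, by simpa [firstIdeal] using hz⟩

theorem mem_firstLimitClosure_succ_of_mul_mem {i : ℕ} (hi : i < d) {r : R}
    (hr : r * x ⟨i, hi⟩ ∈ firstIdeal x i) : r ∈ firstLimitClosure x (i + 1) := by
  set s := Finset.univ.filter (fun j : Fin d => (j : ℕ) < i)
  have hxi : (⟨i, hi⟩ : Fin d) ∉ s := by simp [s]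
  refine ⟨2, by norm_num, ?_⟩
  have hspan : Ideal.span ((fun j => x j ^ 2) '' s) ≤
      Ideal.span ((fun j => x j ^ 2) '' {j : Fin d | (j : ℕ) < i + 1}) :=
    Ideal.span_mono (Set.image_mono fun j (hj : j ∈ s) => by simp [s] at hj; simp; omega)
  have hprod := Ideal.prod_mul_mem_span_sq_image x s (a := r * x ⟨i, hi⟩)
    (by simpa [s, firstIdeal] using hr)
  rw [filter_val_lt_succ i hi, Finset.prod_insert hxi]
  convert hspan hprod using 1
  ring

end FirstIdeal

theorem stmt10_general {R : Type*} [CommRing R]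
    (p : ℕ)
    (d : ℕ) (x : Fin d → R)
    (U : ℕ → Ideal R)
    (hcolon : ∀ (i : ℕ) (hi : i < d),
      (firstIdeal x i).colon (Ideal.span {x ⟨i, hi⟩}) = U i)
    (hU : ∀ i : ℕ, i < d → (U i : Set R) = tightClosure p (firstIdeal x i)) :
    ∀ (i : ℕ) (hi : i < d), ∀ r ∈ tightClosure p (firstIdeal x i),
      r ∈ firstLimitClosure x (i + 1) ∧ r * x ⟨i, hi⟩ ∈ firstLimitClosure x (i + 1) := by
  intro i hi r hr
  have hmul : r * x ⟨i, hi⟩ ∈ firstIdeal x i := by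
    rw [← hU i hi, SetLike.mem_coe, ← hcolon i hi] at hr
    exact Submodule.mem_colon_span_singleton.mp hr
  exact ⟨mem_firstLimitClosure_succ_of_mul_mem x hi hmul,
    firstIdeal_subset_firstLimitClosure x (i + 1) (firstIdeal_mono x i.le_succ hmul)⟩

/-- if `x_1,…,x_d` is an sop of a Noetherian local ring of characteristic
`p > 0` with `(x_1,…,x_i) : x_{i+1} = (x_1,…,x_i)^unm` and `(x_1,…,x_i)^unm = (x_1,…,x_i)^*`
for all `i < d`, then `(x_1,…,x_i)^* ⊆ (x_1,…,x_{i+1})^lim`; consequently both natural maps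
`(x_1,…,x_i)^*/(x_1,…,x_i)^lim → (x_1,…,x_{i+1})^*/(x_1,…,x_{i+1})^lim`, `r ↦ r` and
`r ↦ r·x_{i+1}`, are zero. -/
theorem stmt10 {R : Type*} [CommRing R] [IsLocalRing R] [IsNoetherianRing R]
    (p : ℕ) [Fact p.Prime] [CharP R p]
    (d : ℕ) (hd : ringKrullDim R = d) (x : Fin d → R)
    (hsop : (Ideal.span (Set.range x)).radical = maximalIdeal R)
    (U : ℕ → Ideal R)
    (hcolon : ∀ (i : ℕ) (hi : i < d),
      (firstIdeal x i).colon (Ideal.span {x ⟨i, hi⟩}) = U i)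
    (hU : ∀ i : ℕ, i < d → (U i : Set R) = tightClosure p (firstIdeal x i)) :
    ∀ (i : ℕ) (hi : i < d), ∀ r ∈ tightClosure p (firstIdeal x i),
      r ∈ firstLimitClosure x (i + 1) ∧ r * x ⟨i, hi⟩ ∈ firstLimitClosure x (i + 1) :=
  stmt10_general p d x U hcolon hU
end

section
/- Let R → R̄ = R/x_dR be the natural surjection, where x_1,...,x_d are parameters in a Noetherian local ring of characteristic p > 0. If r ∈ R satisfies (x̄_1⋯x̄_{d-1})^s r̄ ∈ (x̄_1^{s+1},...,x̄_{d-1}^{s+1}) in R̄ for some s ≥ 0 (i.e., r̄ ∈ (x̄_1,...,x̄_{d-1})^lim), then r ∈ (x_1,...,x_d)^lim in R. -/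
open IsLocalRing

/-- let `x_1,…,x_{d}` (here of length `n+1`, `x_d = x (Fin.last n)`) be
parameters in a Noetherian local ring and `R̄ = R/x_dR`. If
`(x̄_1⋯x̄_{d-1})^s r̄ ∈ (x̄_1^{s+1},…,x̄_{d-1}^{s+1})` in `R̄` for some `s ≥ 0`, i.e.
`r̄ ∈ (x̄_1,…,x̄_{d-1})^lim`, then `r ∈ (x_1,…,x_d)^lim` in `R`. -/
theorem stmt11 {R : Type*} [CommRing R] [IsLocalRing R] [IsNoetherianRing R]
    {n : ℕ} (x : Fin (n + 1) → R) (hxm : ∀ j, x j ∈ maximalIdeal R) (r : R) (s : ℕ)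
    (h : (∏ j : Fin n, Ideal.Quotient.mk (Ideal.span {x (Fin.last n)}) (x j.castSucc)) ^ s *
        Ideal.Quotient.mk (Ideal.span {x (Fin.last n)}) r ∈
      Ideal.span (Set.range fun j : Fin n =>
        (Ideal.Quotient.mk (Ideal.span {x (Fin.last n)}) (x j.castSucc)) ^ (s + 1))) :
    ∃ s' ≥ 1, (∏ j, x j) ^ (s' - 1) * r ∈ Ideal.span (Set.range fun j => x j ^ s') := by
  refine ⟨s + 1, by omega, ?_⟩
  set I := Ideal.span {x (Fin.last n)}
  have key : (∏ j : Fin n, x j.castSucc) ^ s * r ∈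
      Ideal.span (Set.range fun j : Fin n => x j.castSucc ^ (s + 1)) ⊔ I := by
    rw [← Ideal.mem_quotient_iff_mem_sup, Ideal.map_span, ← Set.range_comp]
    convert h using 2
    · rfl
    · ext; simp [Function.comp_def]
    · simp [map_mul, map_pow, map_prod]
  rw [Submodule.mem_sup] at key
  obtain ⟨a, ha, b, hb, hab⟩ := key
  rw [Ideal.mem_span_singleton] at hb
  obtain ⟨c, rfl⟩ := hb
  simp only [Nat.add_sub_cancel]
  have h1 : a ∈ Ideal.span (Set.range fun j : Fin (n + 1) => x j ^ (s + 1)) := by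
    refine Ideal.span_mono ?_ ha
    rintro _ ⟨j, rfl⟩
    exact ⟨j.castSucc, rfl⟩
  have h2 : x (Fin.last n) ^ (s + 1) ∈
      Ideal.span (Set.range fun j : Fin (n + 1) => x j ^ (s + 1)) :=
    Ideal.subset_span ⟨Fin.last n, rfl⟩
  have heq : (∏ j, x j) ^ s * r = x (Fin.last n) ^ s * a + c * x (Fin.last n) ^ (s + 1) := by
    rw [Fin.prod_univ_castSucc]
    linear_combination -x (Fin.last n) ^ s * hab
  rw [heq]
  exact Ideal.add_mem _ (Ideal.mul_mem_left _ _ h1) (Ideal.mul_mem_left _ _ h2)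
end
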